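/- Let μ be a Borel probability measure on Cantor space and suppose there is a constant r ∈ ℕ such that C(μ↾n) ≥ n − r for infinitely many n (i.e., μ is Kolmogorov random). Then μ is ML absolutely continuous. -/

import Mathlib

open MeasureTheory Filter

/-- Cantor space: the space of infinite binary sequences. -/
abbrev Cantor : Type := ℕ → Bool

/-- Finite binary strings. -/
abbrev BStr : Type := List Bool

/-- The cylinder set of sequences extending the string `x`. -/
def cyl (x : BStr) : Set Cantor := {Z | ∀ i : Fin x.length, Z i.1 = x.get i}

/-- The string of the first `n` bits of `Z`. -/
def seg (Z : Cantor) (n : ℕ) : BStr := List.ofFn fun i : Fin n => Z i.1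

/-- `lam` is the uniform (fair-coin product) measure: every cylinder `[x]`
has measure `2^{-|x|}`. -/
def IsUniform (lam : Measure Cantor) : Prop :=
  ∀ x : BStr, lam (cyl x) = (2 : ENNReal)⁻¹ ^ x.length

/-- `(G_m)` is a Martin-Löf test with respect to the measure `ρ`:
the sets `G_m` are uniformly effectively open and `ρ (G_m) ≤ 2^{-m}`. -/
def IsMLTest (ρ : Measure Cantor) (G : ℕ → Set Cantor) : Prop :=
  (∃ σ : ℕ → ℕ → BStr, Computable₂ σ ∧ ∀ m, G m = ⋃ i, cyl (σ m i)) ∧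
  ∀ m, ρ (G m) ≤ (2 : ENNReal)⁻¹ ^ m

/-- `μ` is Martin-Löf absolutely continuous in `ρ`: `inf_m μ(G_m) = 0`
for every `ρ`-Martin-Löf test `(G_m)`. -/
def MLAC (μ ρ : Measure Cantor) : Prop :=
  ∀ G : ℕ → Set Cantor, IsMLTest ρ G → ⨅ m, μ (G m) = 0

/-- `Z` is Martin-Löf random with respect to `lam`. -/
def MLRandom (lam : Measure Cantor) (Z : Cantor) : Prop :=
  ∀ G : ℕ → Set Cantor, IsMLTest lam G → Z ∉ ⋂ m, G m

/-- `ρ` is a computable measure: `ρ [x]` is a computable real, uniformly in `x`. -/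
def ComputableMeasure (ρ : Measure Cantor) : Prop :=
  ∃ q : BStr → ℕ → ℚ, Computable₂ q ∧
    ∀ x k, |(q x k : ℝ) - (ρ (cyl x)).toReal| ≤ (2 : ℝ)⁻¹ ^ k

/-- `U` is a universal plain machine. -/
def UniversalPlain (U : BStr →. BStr) : Prop :=
  Partrec U ∧ ∀ M : BStr →. BStr, Partrec M →
    ∃ c : ℕ, ∀ p x, x ∈ M p → ∃ q : BStr, q.length ≤ p.length + c ∧ x ∈ U q

/-- The domain of `M` is an antichain under the prefix relation. -/
def PrefixFreeDom (M : BStr →. BStr) : Prop :=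
  ∀ p q : BStr, (M p).Dom → (M q).Dom → p <+: q → p = q

/-- `U` is a universal prefix-free machine. -/
def UniversalPrefixFree (U : BStr →. BStr) : Prop :=
  Partrec U ∧ PrefixFreeDom U ∧
  ∀ M : BStr →. BStr, Partrec M → PrefixFreeDom M →
    ∃ c : ℕ, ∀ p x, x ∈ M p → ∃ q : BStr, q.length ≤ p.length + c ∧ x ∈ U q

/-- Kolmogorov complexity of the string `x` with respect to the machine `U`:
the minimal length of a `U`-description of `x`. -/
noncomputable def cpx (U : BStr →. BStr) (x : BStr) : ℕ :=
  sInf {n | ∃ q : BStr, q.length = n ∧ x ∈ U q}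

/-- A natural number `n` identified with the string `0^n`. -/
def numStr (n : ℕ) : BStr := List.replicate n false

/-- Complexity of the natural number `n` (i.e., of the string `0^n`). -/
noncomputable def cpxN (U : BStr →. BStr) (n : ℕ) : ℕ := cpx U (numStr n)

/-- The `μ`-average complexity of the strings of length `n`:
`Σ_{|x|=n} cpx(x) · μ[x]`. -/
noncomputable def avgCpx (U : BStr →. BStr) (μ : Measure Cantor) (n : ℕ) : ℝ :=
  ∑ v : Fin n → Bool, (cpx U (List.ofFn v) : ℝ) * (μ (cyl (List.ofFn v))).toReal

/-- A measure `μ` is trivial for the complexity given by the machine `U`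
(e.g. K-trivial when `U` is the universal prefix-free machine, C-trivial
when `U` is the universal plain machine). -/
def MeasTrivial (U : BStr →. BStr) (μ : Measure Cantor) : Prop :=
  ∃ c : ℝ, ∀ n : ℕ, avgCpx U μ n ≤ (cpxN U n : ℝ) + c

/-!
If `μ` is not ML absolutely continuous, some test `(G_m)` has `μ(G_m) > δ > 0` for every `m`.
A machine reading `0^s 1 w` outputs the `w`-th distinct string of length `n = 2^s + |w|` found
inside `G_{2^s}`; as `λ(G_{2^s}) ≤ 2^{-2^s}` there are at most `2^{n - 2^s}` of them, so each
gets a description of length `s + 1 + n - 2^s`, about `2^s` bits below the trivial bound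
`C(x) ≤ n + O(1)`. For large `n` these strings carry `μ`-mass more than `δ`, hence
`C(μ↾n) ≤ n + O(1) - δ (2^s - s - O(1))`, which falls below `n - r` once `s` is large.
-/

open Function Topology

def toBits : ℕ → ℕ → BStr
  | _, 0 => []
  | k, ℓ + 1 => decide (k % 2 = 1) :: toBits (k / 2) ℓ

def ofBits (w : BStr) : ℕ := w.foldr (fun b a => b.toNat + 2 * a) 0

@[simp] lemma length_toBits (k ℓ : ℕ) : (toBits k ℓ).length = ℓ := by
  induction ℓ generalizing k with
  | zero => rfl
  | succ ℓ ih => simp [toBits, ih]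

lemma ofBits_toBits (k ℓ : ℕ) : ofBits (toBits k ℓ) = k % 2 ^ ℓ := by
  induction ℓ generalizing k with
  | zero => simp [toBits, ofBits, Nat.mod_one]
  | succ ℓ ih =>
    have hbit : (decide (k % 2 = 1)).toNat = k % 2 := by
      rcases Nat.mod_two_eq_zero_or_one k with h | h <;> simp [h]
    simp only [toBits, ofBits, List.foldr_cons] at ih ⊢
    rw [ih, hbit, pow_succ', Nat.mod_mul]

lemma primrec_ofBits : Primrec ofBits :=
  (Primrec.list_foldr .id (.const 0) <| .to₂ <| Primrec.nat_add.comp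
    (Primrec.cond (Primrec.fst.comp .snd) (.const 1) (.const 0))
    (Primrec.nat_mul.comp (.const 2) (Primrec.snd.comp .snd))).of_eq
    fun _ => rfl

lemma primrec_two_pow : Primrec (2 ^ · : ℕ → ℕ) :=
  (Primrec₂.unpaired.mp (Primrec.nat_iff.mpr Nat.Primrec.pow)).comp (.const 2) .id

section DistinctValues

variable {α : Type*} [DecidableEq α]

-- Values in order of first appearance, so that the index of a value never changes as `j` grows.
def distinctValues (f : ℕ → Option α) (j : ℕ) : List α :=
  Nat.rec [] (fun i l => (f i).elim l fun x => if x ∈ l then l else l ++ [x]) j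

variable (f : ℕ → Option α)

lemma distinctValues_succ (j : ℕ) :
    distinctValues f (j + 1) =
      (f j).elim (distinctValues f j) fun x =>
        if x ∈ distinctValues f j then distinctValues f j else distinctValues f j ++ [x] :=
  rfl

lemma distinctValues_prefix_succ (j : ℕ) : distinctValues f j <+: distinctValues f (j + 1) := by
  rw [distinctValues_succ]
  cases f j with
  | none => exact List.prefix_refl _
  | some x => dsimp only [Option.elim]; split_ifs <;> simp

lemma distinctValues_prefix {j j' : ℕ} (h : j ≤ j') :
    distinctValues f j <+: distinctValues f j' := by
  induction j', h using Nat.le_induction with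
  | base => exact List.prefix_refl _
  | succ j' _ ih => exact ih.trans (distinctValues_prefix_succ f j')

lemma getElem?_distinctValues_of_le {j j' k : ℕ} {x : α} (h : j ≤ j')
    (hx : (distinctValues f j)[k]? = some x) : (distinctValues f j')[k]? = some x := by
  obtain ⟨hk, rfl⟩ := List.getElem?_eq_some_iff.mp hx
  exact List.prefix_iff_getElem?.mp (distinctValues_prefix f h) k hk

lemma nodup_distinctValues (j : ℕ) : (distinctValues f j).Nodup := by
  induction j with
  | zero => exact List.nodup_nil
  | succ j ih =>
    rw [distinctValues_succ]
    cases f j with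
    | none => exact ih
    | some x =>
      dsimp only [Option.elim]
      split_ifs with hx
      · exact ih
      · exact ih.append (List.nodup_singleton x) (by simpa using hx)

lemma mem_distinctValues {j : ℕ} {x : α} :
    x ∈ distinctValues f j ↔ ∃ i < j, f i = some x := by
  induction j with
  | zero => simp [distinctValues]
  | succ j ih =>
    have hsplit : (∃ i < j + 1, f i = some x) ↔ (∃ i < j, f i = some x) ∨ f j = some x := by
      simp only [Nat.lt_succ_iff_lt_or_eq, or_and_right, exists_or, exists_eq_left]
    rw [hsplit, ← ih, distinctValues_succ]
    cases f j with
    | none => simp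
    | some y => dsimp only [Option.elim]; split_ifs <;> grind

lemma computable_distinctValues {γ : Type*} [Primcodable α] [Primcodable γ]
    {f : γ → ℕ → Option α} (hf : Computable₂ f) :
    Computable₂ fun c j => distinctValues (f c) j := by
  have hmem : PrimrecRel fun (l : List α) (x : α) => x ∈ l :=
    (PrimrecRel.exists_mem_list Primrec.eq).of_eq fun l x => by simp
  have hinsert : Computable₂ fun (l : List α) (x : α) => if x ∈ l then l else l ++ [x] :=
    (Primrec.ite hmem Primrec.fst (Primrec.list_concat.comp .fst .snd)).to_comp
  have hstep : Computable₂ fun (c : γ × ℕ) (p : ℕ × List α) =>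
      (f c.1 p.1).elim p.2 fun x => if x ∈ p.2 then p.2 else p.2 ++ [x] := by
    have hval : Computable fun q : (γ × ℕ) × ℕ × List α => f q.1.1 q.2.1 :=
      hf.comp (Computable.fst.comp Computable.fst) (Computable.fst.comp Computable.snd)
    have hins : Computable₂ fun (q : (γ × ℕ) × ℕ × List α) (x : α) =>
        if x ∈ q.2.2 then q.2.2 else q.2.2 ++ [x] :=
      hinsert.comp (Computable.snd.comp (Computable.snd.comp Computable.fst)) Computable.snd
    exact Computable₂.mk ((Computable.option_casesOn hval (Computable.snd.comp Computable.snd)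
      hins).of_eq fun q => by cases f q.1.1 q.2.1 <;> rfl)
  have h := Computable.nat_rec (Computable.snd : Computable fun c : γ × ℕ => c.2)
    (Computable.const ([] : List α)) hstep
  exact Computable₂.mk (h.of_eq fun _ => rfl)

end DistinctValues

section Extensions

open Encodable

def extEnum (τ : ℕ → BStr) (n i : ℕ) : Option BStr :=
  (decode i.unpair.2 : Option BStr).bind fun w =>
    if (τ i.unpair.1 ++ w).length = n then some (τ i.unpair.1 ++ w) else none

lemma extEnum_eq_some {τ : ℕ → BStr} {n i : ℕ} {x : BStr} (h : extEnum τ n i = some x) :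
    x.length = n ∧ τ i.unpair.1 <+: x := by
  simp only [extEnum, Option.bind_eq_some_iff, Option.ite_none_right_eq_some,
    Option.some.injEq] at h
  obtain ⟨w, -, hlen, rfl⟩ := h
  exact ⟨hlen, List.prefix_append _ _⟩

lemma exists_extEnum_eq_some {τ : ℕ → BStr} {n a : ℕ} {x : BStr} (hx : x.length = n)
    (ha : τ a <+: x) : ∃ i, extEnum τ n i = some x := by
  obtain ⟨w, rfl⟩ := ha
  exact ⟨Nat.pair a (encode w), by simp [extEnum, ← hx]⟩

lemma computable_extEnum {σ : ℕ → ℕ → BStr} (hσ : Computable₂ σ) :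
    Computable₂ fun (mn : ℕ × ℕ) (i : ℕ) => extEnum (σ mn.1) mn.2 i := by
  have hdecode : Computable fun q : (ℕ × ℕ) × ℕ => (decode q.2.unpair.2 : Option BStr) :=
    Primrec.decode.to_comp.comp (Primrec.snd.to_comp.comp (Primrec.unpair.to_comp.comp .snd))
  have hpre : Computable fun q : (ℕ × ℕ) × ℕ => σ q.1.1 q.2.unpair.1 :=
    hσ.comp (Computable.fst.comp .fst)
      (Primrec.fst.to_comp.comp (Primrec.unpair.to_comp.comp .snd))
  have happ : Computable₂ fun (q : (ℕ × ℕ) × ℕ) (w : BStr) =>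
      σ q.1.1 q.2.unpair.1 ++ w :=
    Primrec.list_append.to_comp.comp (hpre.comp .fst) .snd
  have hguard : Computable₂ fun (q : (ℕ × ℕ) × ℕ) (w : BStr) =>
      if (σ q.1.1 q.2.unpair.1 ++ w).length = q.1.2 then
        some (σ q.1.1 q.2.unpair.1 ++ w) else none :=
    Computable.cond (Primrec.eq.decide.to_comp.comp (Primrec.list_length.to_comp.comp happ)
        (Computable.snd.comp (Computable.fst.comp .fst)))
      (Computable.option_some.comp happ) (Computable.const none) |>.of_eq
      fun p => by by_cases h : (σ p.1.1.1 p.1.2.unpair.1 ++ p.2).length = p.1.1.2 <;> simp [h]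
  exact Computable₂.mk (Computable.option_bind hdecode hguard)

open Classical in
noncomputable def extensions (τ : ℕ → BStr) (n : ℕ) : Finset (Fin n → Bool) :=
  Finset.univ.filter fun v => ∃ i, τ i <+: List.ofFn v

lemma mem_extensions {τ : ℕ → BStr} {n : ℕ} {v : Fin n → Bool} :
    v ∈ extensions τ n ↔ ∃ i, τ i <+: List.ofFn v := by
  simp [extensions]

lemma length_distinctValues_extEnum_le (τ : ℕ → BStr) (n j : ℕ) :
    (distinctValues (extEnum τ n) j).length ≤ (extensions τ n).card := by
  classical
  rw [← List.toFinset_card_of_nodup (nodup_distinctValues _ j)]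
  refine (Finset.card_le_card (t := (extensions τ n).image List.ofFn) fun x hx => ?_).trans
    Finset.card_image_le
  obtain ⟨i, -, hi⟩ := (mem_distinctValues _).mp (List.mem_toFinset.mp hx)
  obtain ⟨hlen, hpre⟩ := extEnum_eq_some hi
  subst hlen
  exact Finset.mem_image.mpr
    ⟨x.get, mem_extensions.mpr ⟨_, (List.ofFn_get x).symm ▸ hpre⟩, List.ofFn_get x⟩

end Extensions

section Cylinders

lemma measurableSet_cyl (x : BStr) : MeasurableSet (cyl x) := by
  have : cyl x = ⋂ i : Fin x.length, (fun Z : Cantor => Z i.1) ⁻¹' {x.get i} := by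
    ext Z; simp [cyl]
  rw [this]
  exact .iInter fun i => measurable_pi_apply i.1 (.singleton _)

lemma cyl_subset_cyl {x y : BStr} (h : x <+: y) : cyl y ⊆ cyl x := fun Z hZ i => by
  rw [hZ ⟨i, i.2.trans_le h.length_le⟩]
  simp [List.IsPrefix.getElem h i.2]

lemma mem_cyl_ofFn {n : ℕ} {v : Fin n → Bool} {Z : Cantor} :
    Z ∈ cyl (List.ofFn v) ↔ ∀ i : Fin n, Z i = v i := by
  simp [cyl, Fin.forall_iff]

lemma pairwise_disjoint_cyl_ofFn (n : ℕ) :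
    Pairwise (Disjoint on fun v : Fin n → Bool => cyl (List.ofFn v)) :=
  fun v w hvw => Set.disjoint_left.mpr fun Z hv hw =>
    hvw (funext fun i => by rw [← mem_cyl_ofFn.mp hv i, ← mem_cyl_ofFn.mp hw i])

lemma measure_biUnion_cyl_ofFn (μ : Measure Cantor) {n : ℕ} (T : Finset (Fin n → Bool)) :
    μ (⋃ v ∈ T, cyl (List.ofFn v)) = ∑ v ∈ T, μ (cyl (List.ofFn v)) :=
  measure_biUnion_finset ((pairwise_disjoint_cyl_ofFn n).set_pairwise _)
    fun _ _ => measurableSet_cyl _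

lemma measureReal_biUnion_cyl_ofFn (μ : Measure Cantor) [IsFiniteMeasure μ] {n : ℕ}
    (T : Finset (Fin n → Bool)) :
    μ.real (⋃ v ∈ T, cyl (List.ofFn v)) = ∑ v ∈ T, μ.real (cyl (List.ofFn v)) :=
  measureReal_biUnion_finset ((pairwise_disjoint_cyl_ofFn n).set_pairwise _)
    fun _ _ => measurableSet_cyl _

lemma sum_measureReal_cyl_ofFn (μ : Measure Cantor) [IsProbabilityMeasure μ] (n : ℕ) :
    ∑ v : Fin n → Bool, μ.real (cyl (List.ofFn v)) = 1 := by
  rw [← measureReal_biUnion_cyl_ofFn, ← probReal_univ (μ := μ)]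
  congr 1
  refine Set.eq_univ_of_forall fun Z => ?_
  simpa using ⟨fun i : Fin n => Z i, mem_cyl_ofFn.mpr fun i => rfl⟩

lemma cyl_subset_biUnion_extensions {τ : ℕ → BStr} {n i : ℕ} (h : (τ i).length ≤ n) :
    cyl (τ i) ⊆ ⋃ v ∈ extensions τ n, cyl (List.ofFn v) := fun Z hZ => by
  refine Set.mem_biUnion (x := fun j : Fin n => Z j) (mem_extensions.mpr ⟨i, ?_⟩)
    (mem_cyl_ofFn.mpr fun _ => rfl)
  rw [List.prefix_iff_eq_take]
  refine List.ext_get (by simp [h]) fun j h1 _ => ?_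
  simpa using (hZ ⟨j, h1⟩).symm

lemma biUnion_extensions_subset (τ : ℕ → BStr) (n : ℕ) :
    ⋃ v ∈ extensions τ n, cyl (List.ofFn v) ⊆ ⋃ i, cyl (τ i) :=
  Set.iUnion₂_subset fun _ hv =>
    let ⟨i, hi⟩ := mem_extensions.mp hv
    (cyl_subset_cyl hi).trans (Set.subset_iUnion (fun i => cyl (τ i)) i)

end Cylinders

-- On input `0^s 1 w`: the `ofBits w`-th distinct string of length `2^s + |w|` found to extend
-- some `σ (2^s) i`.
def indexMachine (σ : ℕ → ℕ → BStr) (p : BStr) : Part BStr :=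
  Nat.rfindOpt fun j =>
    (distinctValues (extEnum (σ (2 ^ p.idxOf true))
        (2 ^ p.idxOf true + (p.drop (p.idxOf true + 1)).length)) j)[
      ofBits (p.drop (p.idxOf true + 1))]?

lemma partrec_indexMachine {σ : ℕ → ℕ → BStr} (hσ : Computable₂ σ) :
    Partrec (indexMachine σ) := by
  have hs : Computable fun p : BStr => p.idxOf true :=
    Primrec.list_idxOf.to_comp.comp (Computable.const true) Computable.id
  have hw : Computable fun p : BStr => p.drop (p.idxOf true + 1) :=
    Primrec.list_drop.to_comp.comp (Primrec.succ.to_comp.comp hs) Computable.id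
  have hm : Computable fun p : BStr => 2 ^ p.idxOf true := primrec_two_pow.to_comp.comp hs
  have hn : Computable fun p : BStr => 2 ^ p.idxOf true + (p.drop (p.idxOf true + 1)).length :=
    Primrec.nat_add.to_comp.comp hm (Primrec.list_length.to_comp.comp hw)
  have hlist : Computable fun q : BStr × ℕ =>
      distinctValues (extEnum (σ (2 ^ q.1.idxOf true))
        (2 ^ q.1.idxOf true + (q.1.drop (q.1.idxOf true + 1)).length)) q.2 :=
    ((computable_distinctValues (computable_extEnum hσ)).comp
      (Computable.pair (hm.comp .fst) (hn.comp .fst)) .snd).of_eq fun _ => rfl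
  have hk : Computable fun q : BStr × ℕ => ofBits (q.1.drop (q.1.idxOf true + 1)) :=
    (primrec_ofBits.to_comp.comp hw).comp .fst
  exact Partrec.rfindOpt (Computable₂.mk (Primrec.list_getElem?.to_comp.comp hlist hk))

lemma mem_indexMachine {σ : ℕ → ℕ → BStr} {s n j k : ℕ} {x : BStr} (hn : 2 ^ s ≤ n)
    (hk : k < 2 ^ (n - 2 ^ s)) (hx : (distinctValues (extEnum (σ (2 ^ s)) n) j)[k]? = some x) :
    x ∈ indexMachine σ (List.replicate s false ++ true :: toBits k (n - 2 ^ s)) := by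
  have hidx : (List.replicate s false ++ true :: toBits k (n - 2 ^ s)).idxOf true = s := by
    simp [List.idxOf_append]
  have hdrop : (List.replicate s false ++ true :: toBits k (n - 2 ^ s)).drop (s + 1) =
      toBits k (n - 2 ^ s) := by
    simpa using
      List.drop_left (l₁ := List.replicate s false ++ [true]) (l₂ := toBits k (n - 2 ^ s))
  rw [indexMachine, hidx, hdrop, length_toBits, ofBits_toBits, Nat.mod_eq_of_lt hk,
    Nat.add_sub_cancel' hn,
    Nat.rfindOpt_mono fun h ha => getElem?_distinctValues_of_le _ h ha]
  exact ⟨j, hx⟩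

lemma card_extensions_le {lam : Measure Cantor} (hlam : IsUniform lam) {τ : ℕ → BStr}
    {m n : ℕ} (hτ : lam (⋃ i, cyl (τ i)) ≤ (2 : ENNReal)⁻¹ ^ m) (hmn : m ≤ n) :
    (extensions τ n).card ≤ 2 ^ (n - m) := by
  obtain ⟨d, rfl⟩ := Nat.exists_eq_add_of_le hmn
  have hmass :
      ((extensions τ (m + d)).card : ENNReal) * 2⁻¹ ^ (m + d) ≤ 2 ^ d * 2⁻¹ ^ (m + d) :=
    calc ((extensions τ (m + d)).card : ENNReal) * 2⁻¹ ^ (m + d)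
        = lam (⋃ v ∈ extensions τ (m + d), cyl (List.ofFn v)) := by
          rw [measure_biUnion_cyl_ofFn, Finset.sum_congr rfl fun v _ => hlam _]
          simp
      _ ≤ lam (⋃ i, cyl (τ i)) := measure_mono (biUnion_extensions_subset τ _)
      _ ≤ 2⁻¹ ^ m := hτ
      _ = 2 ^ d * 2⁻¹ ^ (m + d) := by
          rw [pow_add, mul_left_comm, ← mul_pow, ENNReal.mul_inv_cancel two_ne_zero
            ENNReal.ofNat_ne_top, one_pow, mul_one]
  have hcard := (ENNReal.mul_le_mul_iff_left (by simp) (by simp)).mp hmass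
  simpa using (show (extensions τ (m + d)).card ≤ 2 ^ d by exact_mod_cast hcard)

lemma eventually_lt_sum_measureReal_extensions (μ : Measure Cantor) [IsFiniteMeasure μ]
    {τ : ℕ → BStr} {δ : ℝ} (hδ : δ < μ.real (⋃ i, cyl (τ i))) :
    ∀ᶠ n in atTop, δ < ∑ v ∈ extensions τ n, μ.real (cyl (List.ofFn v)) := by
  have hlim : Tendsto (fun N => μ.real (Set.accumulate (fun i => cyl (τ i)) N)) atTop
      (𝓝 (μ.real (⋃ i, cyl (τ i)))) :=
    (ENNReal.tendsto_toReal (measure_ne_top μ _)).comp tendsto_measure_iUnion_accumulate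
  obtain ⟨N, hN⟩ := (hlim.eventually (lt_mem_nhds hδ)).exists
  filter_upwards [eventually_ge_atTop ((Finset.range (N + 1)).sup fun i => (τ i).length)]
    with n hn
  rw [← measureReal_biUnion_cyl_ofFn]
  refine hN.trans_le (measureReal_mono (Set.iUnion₂_subset fun i hi => ?_) (measure_ne_top μ _))
  exact cyl_subset_biUnion_extensions <|
    (Finset.le_sup (f := fun i => (τ i).length) (by simpa [Nat.lt_succ_iff] using hi)).trans hn

lemma cpx_le_length {U : BStr →. BStr} {x q : BStr} (h : x ∈ U q) : cpx U x ≤ q.length :=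
  Nat.sInf_le ⟨q, rfl, h⟩

lemma UniversalPlain.exists_cpx_le {U M : BStr →. BStr} (hU : UniversalPlain U)
    (hM : Partrec M) : ∃ c, ∀ p x, x ∈ M p → cpx U x ≤ p.length + c :=
  let ⟨c, hc⟩ := hU.2 M hM
  ⟨c, fun p x hx => let ⟨_, hq, hxq⟩ := hc p x hx; (cpx_le_length hxq).trans hq⟩

lemma UniversalPlain.exists_cpx_le_length_add {U : BStr →. BStr} (hU : UniversalPlain U) :
    ∃ c, ∀ x, cpx U x ≤ x.length + c :=
  let ⟨c, hc⟩ := hU.exists_cpx_le (M := fun p => Part.some p) Computable.id.partrec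
  ⟨c, fun x => hc x x (Part.mem_some x)⟩

lemma UniversalPlain.exists_cpx_le_of_extensions {U : BStr →. BStr} (hU : UniversalPlain U)
    {lam : Measure Cantor} (hlam : IsUniform lam) {σ : ℕ → ℕ → BStr}
    (hσ : Computable₂ σ)
    (hσlam : ∀ m, lam (⋃ i, cyl (σ m i)) ≤ (2 : ENNReal)⁻¹ ^ m) :
    ∃ c, ∀ s n, 2 ^ s ≤ n → ∀ v ∈ extensions (σ (2 ^ s)) n,
      cpx U (List.ofFn v) ≤ s + 1 + (n - 2 ^ s) + c := by
  obtain ⟨c, hc⟩ := hU.exists_cpx_le (partrec_indexMachine hσ)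
  refine ⟨c, fun s n hsn v hv => ?_⟩
  obtain ⟨a, ha⟩ := mem_extensions.mp hv
  obtain ⟨i, hi⟩ := exists_extEnum_eq_some List.length_ofFn ha
  obtain ⟨k, hk⟩ := List.getElem?_of_mem
    ((mem_distinctValues _).mpr ⟨i, Nat.lt_succ_self i, hi⟩)
  have hk_lt : k < 2 ^ (n - 2 ^ s) :=
    calc k < _ := (List.getElem?_eq_some_iff.mp hk).1
      _ ≤ (extensions (σ (2 ^ s)) n).card := length_distinctValues_extEnum_le _ n _
      _ ≤ 2 ^ (n - 2 ^ s) := card_extensions_le hlam (hσlam _) hsn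
  have h := hc _ _ (mem_indexMachine hsn hk_lt hk)
  simp only [List.length_append, List.length_replicate, List.length_cons, length_toBits] at h
  omega

lemma avgCpx_le (U : BStr →. BStr) (μ : Measure Cantor) [IsProbabilityMeasure μ] {n : ℕ}
    (S : Finset (Fin n → Bool)) {a b : ℝ} (ha : ∀ v ∈ S, (cpx U (List.ofFn v) : ℝ) ≤ a)
    (hb : ∀ v : Fin n → Bool, (cpx U (List.ofFn v) : ℝ) ≤ b) :
    avgCpx U μ n ≤ b - (b - a) * ∑ v ∈ S, μ.real (cyl (List.ofFn v)) := by
  set w := fun v : Fin n → Bool => μ.real (cyl (List.ofFn v))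
  have hsplit : avgCpx U μ n = ∑ v ∈ S, (cpx U (List.ofFn v) : ℝ) * w v +
      ∑ v ∈ Sᶜ, (cpx U (List.ofFn v) : ℝ) * w v :=
    (Finset.sum_add_sum_compl S _).symm
  have hin : ∑ v ∈ S, (cpx U (List.ofFn v) : ℝ) * w v ≤ a * ∑ v ∈ S, w v := by
    rw [Finset.mul_sum]
    exact Finset.sum_le_sum fun v hv => mul_le_mul_of_nonneg_right (ha v hv) measureReal_nonneg
  have hout : ∑ v ∈ Sᶜ, (cpx U (List.ofFn v) : ℝ) * w v ≤
      b * ∑ v ∈ Sᶜ, w v := by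
    rw [Finset.mul_sum]
    exact Finset.sum_le_sum fun v _ => mul_le_mul_of_nonneg_right (hb v) measureReal_nonneg
  have htotal : ∑ v ∈ S, w v + ∑ v ∈ Sᶜ, w v = 1 := by
    rw [Finset.sum_add_sum_compl, sum_measureReal_cyl_ofFn]
  linear_combination hsplit + hin + hout + b * htotal

lemma exists_le_two_pow_sub (K : ℝ) : ∃ s : ℕ, K ≤ 2 ^ s - s - 1 := by
  obtain ⟨a, ha⟩ := exists_nat_ge K
  have h : (a : ℝ) + 1 ≤ 2 ^ a := by exact_mod_cast Nat.lt_two_pow_self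
  exact ⟨a + 2, by push_cast; rw [pow_add]; linarith⟩

lemma exists_pos_lt_measureReal_of_iInf_ne_zero {α : Type*} [MeasurableSpace α]
    (μ : Measure α) [IsFiniteMeasure μ] {G : ℕ → Set α} (h : ⨅ m, μ (G m) ≠ 0) :
    ∃ δ > 0, ∀ m, δ < μ.real (G m) := by
  have hfin : ⨅ m, μ (G m) ≠ ⊤ := ne_top_of_le_ne_top (measure_ne_top μ (G 0)) (iInf_le _ 0)
  have hpos := ENNReal.toReal_pos h hfin
  refine ⟨(⨅ m, μ (G m)).toReal / 2, half_pos hpos, fun m => ?_⟩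
  have := ENNReal.toReal_mono (measure_ne_top μ (G m)) (iInf_le (fun m => μ (G m)) m)
  rw [measureReal_def]
  linarith

/-- If `μ` is a Kolmogorov random measure, i.e. there is a constant
`r` with `C(μ↾n) ≥ n - r` for infinitely many `n`, then `μ` is ML absolutely
continuous. -/
theorem kolmogorov_random_measure_is_MLAC
    (U : BStr →. BStr) (hU : UniversalPlain U)
    (lam : Measure Cantor) (hlam : IsUniform lam)
    (μ : Measure Cantor) [IsProbabilityMeasure μ]
    (r : ℕ) (hr : ∀ m : ℕ, ∃ n ≥ m, (n : ℝ) - (r : ℝ) ≤ avgCpx U μ n) :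
    MLAC μ lam := by
  rintro G ⟨⟨σ, hσ, hG⟩, hGlam⟩
  obtain rfl : G = fun m => ⋃ i, cyl (σ m i) := funext hG
  by_contra hpos
  obtain ⟨δ, hδ, hmass⟩ := exists_pos_lt_measureReal_of_iInf_ne_zero μ hpos
  obtain ⟨c, hc⟩ := hU.exists_cpx_le_of_extensions hlam hσ hGlam
  obtain ⟨c', hc'⟩ := hU.exists_cpx_le_length_add
  obtain ⟨s, hs⟩ := exists_le_two_pow_sub ((r + c' + 1) / δ + c - c')
  obtain ⟨N, hN⟩ := ((eventually_lt_sum_measureReal_extensions μ (hmass (2 ^ s))).and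
    (eventually_ge_atTop (2 ^ s))).exists_forall_of_atTop
  obtain ⟨n, hnN, hn⟩ := hr N
  obtain ⟨hmass_n, hsn⟩ := hN n hnN
  have havg := avgCpx_le U μ (extensions (σ (2 ^ s)) n)
    (a := s + 1 + (n - 2 ^ s) + c) (b := n + c')
    (fun v hv => by exact_mod_cast hc s n hsn v hv)
    (fun v => by exact_mod_cast List.length_ofFn (f := v) ▸ hc' (List.ofFn v))
  have hgap : r + c' + 1 ≤ (2 ^ s - s - 1 + c' - c) * δ := by
    rw [← div_le_iff₀ hδ]; linarith
  nlinarith
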